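/- Let F be a J-frame for a Krein space H with J-frame operator S, and let S^{1/2} be the invertible J-selfadjoint square root of S (obtained by the Riesz–Dunford functional calculus along a contour in the right half-plane). Then L₊ := S^{1/2}(M₋^{[⊥]}) is a maximal uniformly J-positive subspace, L₋ := S^{1/2}(M₊^{[⊥]}) is a maximal uniformly J-negative subspace, and H = L₊ [∔] L₋ is a fundamental decomposition (in particular L₊ [⊥] L₋). -/

import Mathlib

noncomputable section

open scoped Classical

open Function

/-- The indefinite inner product `[x,y] = ⟨Jx, y⟩` induced by an operator `J`. -/
def kre {E : Type*} [NormedAddCommGroup E] [InnerProductSpace ℂ E]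
    (J : E →L[ℂ] E) (x y : E) : ℂ := @inner ℂ _ _ (J x) y

/-- `J` is a fundamental symmetry: a selfadjoint unitary (involutive) operator. -/
def IsFundSym {E : Type*} [NormedAddCommGroup E] [InnerProductSpace ℂ E] [CompleteSpace E]
    (J : E →L[ℂ] E) : Prop :=
  IsSelfAdjoint J ∧ J.comp J = ContinuousLinearMap.id ℂ E

/-- The J-orthogonal companion of a subspace. -/
def JorthCompanion {E : Type*} [NormedAddCommGroup E] [InnerProductSpace ℂ E]
    (J : E →L[ℂ] E) (S : Submodule ℂ E) : Submodule ℂ E where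
  carrier := {x | ∀ s ∈ S, kre J x s = 0}
  zero_mem' := by intro s hs; simp [kre]
  add_mem' := by
    intro a b ha hb s hs
    have h1 := ha s hs
    have h2 := hb s hs
    simp only [kre, map_add, inner_add_left] at h1 h2 ⊢
    rw [h1, h2, add_zero]
  smul_mem' := by
    intro c x hx s hs
    have h1 := hx s hs
    simp only [kre, map_smul, inner_smul_left] at h1 ⊢
    rw [h1, mul_zero]

/-- Uniformly J-positive subspace. -/
def UnifJPos {E : Type*} [NormedAddCommGroup E] [InnerProductSpace ℂ E]
    (J : E →L[ℂ] E) (S : Submodule ℂ E) : Prop :=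
  ∃ α : ℝ, 0 < α ∧ ∀ x ∈ S, α * ‖x‖ ^ 2 ≤ (kre J x x).re

/-- Uniformly J-negative subspace. -/
def UnifJNeg {E : Type*} [NormedAddCommGroup E] [InnerProductSpace ℂ E]
    (J : E →L[ℂ] E) (S : Submodule ℂ E) : Prop :=
  ∃ α : ℝ, 0 < α ∧ ∀ x ∈ S, (kre J x x).re ≤ -(α * ‖x‖ ^ 2)

/-- Maximal uniformly J-positive subspace. -/
def MaxUnifJPos {E : Type*} [NormedAddCommGroup E] [InnerProductSpace ℂ E]
    (J : E →L[ℂ] E) (S : Submodule ℂ E) : Prop :=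
  UnifJPos J S ∧ ∀ S' : Submodule ℂ E, UnifJPos J S' → S ≤ S' → S' = S

/-- Maximal uniformly J-negative subspace. -/
def MaxUnifJNeg {E : Type*} [NormedAddCommGroup E] [InnerProductSpace ℂ E]
    (J : E →L[ℂ] E) (S : Submodule ℂ E) : Prop :=
  UnifJNeg J S ∧ ∀ S' : Submodule ℂ E, UnifJNeg J S' → S ≤ S' → S' = S

/-- J-selfadjoint operator (with respect to the indefinite inner product of `J`). -/
def IsJSelfAdj {E : Type*} [NormedAddCommGroup E] [InnerProductSpace ℂ E]
    (J : E →L[ℂ] E) (A : E →L[ℂ] E) : Prop :=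
  ∀ x y : E, kre J (A x) y = kre J x (A y)

/-- The J-order: `A ≤_J B` iff `B - A` is J-positive. -/
def JLe {E : Type*} [NormedAddCommGroup E] [InnerProductSpace ℂ E]
    (J : E →L[ℂ] E) (A B : E →L[ℂ] E) : Prop :=
  ∀ x : E, 0 ≤ (kre J (B x - A x) x).re ∧ (kre J (B x - A x) x).im = 0

/-- The subspace of `ℓ²(I)` supported on a subset (given by a predicate) of `I`. -/
def suppSub {I : Type*} (A : I → Prop) : Submodule ℂ (lp (fun _ : I => ℂ) 2) where
  carrier := {x | ∀ i, ¬ A i → x i = 0}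
  zero_mem' := by intro i _; rfl
  add_mem' := by
    intro a b ha hb i hi
    have : (↑(a + b) : ∀ i, ℂ) i = a i + b i := by
      rw [lp.coeFn_add]; rfl
    simp [this, ha i hi, hb i hi]
  smul_mem' := by
    intro c x hx i hi
    have : (↑(c • x) : ∀ i, ℂ) i = c • x i := by
      rw [lp.coeFn_smul]; rfl
    simp [this, hx i hi]

variable {H : Type*} [NormedAddCommGroup H] [InnerProductSpace ℂ H] [CompleteSpace H]
variable {I : Type*} [DecidableEq I]

/-- `i` is a "positive index" for the family `f` w.r.t. `J`: `[f i, f i] ≥ 0`. -/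
def posIdx {H : Type*} [NormedAddCommGroup H] [InnerProductSpace ℂ H]
    (J : H →L[ℂ] H) (f : I → H) (i : I) : Prop := 0 ≤ (kre J (f i) (f i)).re

/-- The sign `σ_i = sgn [f i, f i]` (as a complex scalar, `+1` on `I₊` and `-1` on `I₋`). -/
def sgnv {H : Type*} [NormedAddCommGroup H] [InnerProductSpace ℂ H]
    (J : H →L[ℂ] H) (f : I → H) (i : I) : ℂ := if posIdx J f i then 1 else -1

/-- Closure of the span of the vectors of the family `h` with positive indices (signs taken
from the family `f`). -/
def posSpan {H : Type*} [NormedAddCommGroup H] [InnerProductSpace ℂ H]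
    (J : H →L[ℂ] H) (f h : I → H) : Submodule ℂ H :=
  (Submodule.span ℂ {x | ∃ i, posIdx J f i ∧ h i = x}).topologicalClosure

/-- Closure of the span of the vectors of the family `h` with negative indices. -/
def negSpan {H : Type*} [NormedAddCommGroup H] [InnerProductSpace ℂ H]
    (J : H →L[ℂ] H) (f h : I → H) : Submodule ℂ H :=
  (Submodule.span ℂ {x | ∃ i, ¬ posIdx J f i ∧ h i = x}).topologicalClosure

/-- A Bessel family in a Hilbert space. -/
def IsBessel {H : Type*} [NormedAddCommGroup H] [InnerProductSpace ℂ H]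
    (g : I → H) : Prop :=
  ∃ β : ℝ, ∀ (x : H) (s : Finset I),
    ∑ i ∈ s, ‖@inner ℂ _ _ (g i) x‖ ^ 2 ≤ β * ‖x‖ ^ 2

/-- `g` is a dual family for `f`: the signs coincide and the two indefinite
reconstruction formulas hold. -/
def IsDualFamily {H : Type*} [NormedAddCommGroup H] [InnerProductSpace ℂ H]
    (J : H →L[ℂ] H) (f g : I → H) : Prop :=
  (∀ i, Real.sign ((kre J (g i) (g i)).re) = Real.sign ((kre J (f i) (f i)).re)) ∧
  (∀ x : H, HasSum (fun i => (sgnv J f i * kre J x (f i)) • g i) x) ∧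
  (∀ x : H, HasSum (fun i => (sgnv J f i * kre J x (g i)) • f i) x)


/-!
Write `K = Pp - Pm` for the signature operator of `ℓ²(I)`; then `Tp` is the adjoint of `T` between
`(ℓ²(I), ⟨K ·, ·⟩)` and `(H, [·, ·])`, and `S = T Tp = R²`. A vector `x` lies in `M₋^[⊥]` iff `Tp x`
is supported on `I₊`, and then `[R x, R x] = [x, S x] = ‖Tp x‖²`. As `R`, hence `S`, is invertible,
`Tp` is bounded below, and since `R` is bounded this makes `L₊ = R(M₋^[⊥])` uniformly positive;
`L₋` is handled by passing to `-J`. For `y ∈ M₊^[⊥]` one has `S y ∈ M₋`, so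
`[R x, R y] = [x, S y] = 0`. Finally `M₊ ∩ M₋ = 0` makes the closed range of `Tp` invariant
under `Pp`, which splits `H = M₋^[⊥] + M₊^[⊥]`, hence `H = L₊ + L₋`; a uniformly positive and a
uniformly negative subspace spanning `H` are both maximal.
-/

section KreinForm

variable {E : Type*} [NormedAddCommGroup E] [InnerProductSpace ℂ E]

lemma kre_neg (J : E →L[ℂ] E) (x y : E) : kre (-J) x y = -kre J x y := by
  simp [kre, inner_neg_left]

lemma conj_kre [CompleteSpace E] {J : E →L[ℂ] E} (hJ : IsSelfAdjoint J) (x y : E) :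
    starRingEnd ℂ (kre J x y) = kre J y x := by
  rw [kre, kre, inner_conj_symm]
  exact (hJ.isSymmetric y x).symm

lemma eq_zero_of_forall_kre_eq_zero {J : E →L[ℂ] E} (hJ : Injective J) {w : E}
    (h : ∀ y, kre J w y = 0) : w = 0 :=
  hJ <| by rw [map_zero, ← inner_self_eq_zero (𝕜 := ℂ)]; exact h (J w)

lemma jorthCompanion_neg (J : E →L[ℂ] E) (S : Submodule ℂ E) :
    JorthCompanion (-J) S = JorthCompanion J S := by
  ext x
  exact forall₂_congr fun s _ => by rw [kre_neg, neg_eq_zero]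

lemma unifJPos_neg_iff {J : E →L[ℂ] E} {S : Submodule ℂ E} : UnifJPos (-J) S ↔ UnifJNeg J S := by
  simp only [UnifJPos, UnifJNeg, kre_neg, Complex.neg_re, le_neg]

lemma unifJNeg_neg_iff {J : E →L[ℂ] E} {S : Submodule ℂ E} : UnifJNeg (-J) S ↔ UnifJPos J S := by
  rw [← unifJPos_neg_iff, neg_neg]

lemma maxUnifJPos_neg_iff {J : E →L[ℂ] E} {S : Submodule ℂ E} :
    MaxUnifJPos (-J) S ↔ MaxUnifJNeg J S := by
  simp only [MaxUnifJPos, MaxUnifJNeg, unifJPos_neg_iff]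

lemma IsJSelfAdj.neg {J A : E →L[ℂ] E} (hA : IsJSelfAdj J A) : IsJSelfAdj (-J) A := fun x y => by
  rw [kre_neg, kre_neg, hA]

lemma inf_eq_bot_of_unifJPos_of_unifJNeg {J : E →L[ℂ] E} {L M : Submodule ℂ E}
    (hL : UnifJPos J L) (hM : UnifJNeg J M) : L ⊓ M = ⊥ := by
  obtain ⟨α, hα, hαL⟩ := hL
  obtain ⟨β, hβ, hβM⟩ := hM
  refine eq_bot_iff.mpr fun x ⟨hxL, hxM⟩ => (Submodule.mem_bot ℂ).mpr ?_
  have h := (hαL x hxL).trans (hβM x hxM)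
  have : ‖x‖ ^ 2 = 0 := by nlinarith [sq_nonneg ‖x‖]
  simpa using this

lemma maxUnifJPos_of_sup_eq_top {J : E →L[ℂ] E} {L M : Submodule ℂ E}
    (hL : UnifJPos J L) (hM : UnifJNeg J M) (hLM : L ⊔ M = ⊤) : MaxUnifJPos J L := by
  refine ⟨hL, fun S hS hLS => le_antisymm (fun z hz => ?_) hLS⟩
  obtain ⟨a, ha, b, hb, rfl⟩ := Submodule.mem_sup.mp (hLM ▸ Submodule.mem_top : z ∈ L ⊔ M)
  have hbS : b ∈ S := by simpa using S.sub_mem hz (hLS ha)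
  have hb0 : b = 0 := by
    simpa using (inf_eq_bot_of_unifJPos_of_unifJNeg hS hM).le ⟨hbS, hb⟩
  simpa [hb0] using ha

end KreinForm

lemma ContinuousLinearMap.HasLeftInverse.exists_norm_le {𝕜 E F : Type*} [NontriviallyNormedField 𝕜]
    [NormedAddCommGroup E] [NormedSpace 𝕜 E] [NormedAddCommGroup F] [NormedSpace 𝕜 F]
    {A : E →L[𝕜] F}
    (hA : A.HasLeftInverse) : ∃ C, 0 ≤ C ∧ ∀ x, ‖x‖ ≤ C * ‖A x‖ := by
  obtain ⟨B, hB⟩ := hA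
  exact ⟨‖B‖, norm_nonneg B, fun x => by simpa only [hB x] using B.le_opNorm (A x)⟩

lemma lp.isStarProjection_of_apply_eq_ite {𝕜 ι : Type*} [RCLike 𝕜] (A : ι → Prop)
    {P : lp (fun _ : ι => 𝕜) 2 →L[𝕜] lp (fun _ : ι => 𝕜) 2}
    (hP : ∀ x i, P x i = if A i then x i else 0) : IsStarProjection P := by
  refine ⟨ContinuousLinearMap.ext fun x => lp.ext <| funext fun i => ?_,
    ContinuousLinearMap.isSelfAdjoint_iff_isSymmetric.mpr fun x y => ?_⟩
  · by_cases h : A i <;> simp [hP, h]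
  · simp only [ContinuousLinearMap.coe_coe, lp.inner_eq_tsum]
    congr 1 with i
    by_cases h : A i <;> simp [hP, h]

section ComplementaryProjections

variable {𝕜 F : Type*} [Ring 𝕜] [AddCommGroup F] [Module 𝕜 F] [TopologicalSpace F]
  [IsTopologicalAddGroup F] {Pp Pm : F →L[𝕜] F}

lemma sub_apply_apply_right_of_add_eq_one (hPm : IsIdempotentElem Pm) (hsum : Pp + Pm = 1)
    (x : F) : (Pp - Pm) (Pm x) = -Pm x := by
  have h : Pm (Pm x) = Pm x := DFunLike.congr_fun hPm.eq x
  rw [eq_sub_of_add_eq hsum]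
  simp only [sub_apply, one_apply_eq_self, h]
  abel

lemma sub_apply_apply_left_of_add_eq_one (hPp : IsIdempotentElem Pp) (hsum : Pp + Pm = 1)
    (x : F) : (Pp - Pm) (Pp x) = Pp x := by
  rw [← neg_sub, neg_apply, sub_apply_apply_right_of_add_eq_one hPp ((add_comm _ _).trans hsum),
    neg_neg]

lemma apply_eq_self_of_add_eq_one (hsum : Pp + Pm = 1) {x : F} (hx : Pm x = 0) : Pp x = x := by
  simpa [hx] using DFunLike.congr_fun hsum x

end ComplementaryProjections

section SignedFactorization

variable {E F : Type*} [NormedAddCommGroup E] [InnerProductSpace ℂ E]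
  [NormedAddCommGroup F] [InnerProductSpace ℂ F]
  {J : E →L[ℂ] E} {T : F →L[ℂ] E} {Tp : E →L[ℂ] F} {Pp Pm : F →L[ℂ] F}

lemma jorthCompanion_range_comp_eq_ker [CompleteSpace E] [CompleteSpace F]
    (hJ : IsSelfAdjoint J) (hPm : IsStarProjection Pm) (hsum : Pp + Pm = 1)
    (hTp : ∀ x y, kre J (T x) y = kre (Pp - Pm) x (Tp y)) :
    JorthCompanion J (LinearMap.range (T.comp Pm : F →ₗ[ℂ] E)) =
      LinearMap.ker (Pm.comp Tp : E →ₗ[ℂ] F) := by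
  ext x
  have key : ∀ c, kre J x (T (Pm c)) = -inner ℂ (Pm (Tp x)) c := fun c => by
    rw [← conj_kre hJ, hTp, kre, sub_apply_apply_right_of_add_eq_one hPm.isIdempotentElem hsum,
      inner_neg_left, map_neg, inner_conj_symm]
    exact congrArg Neg.neg (hPm.isSelfAdjoint.isSymmetric _ _).symm
  refine ⟨fun hx => ?_, fun hx => ?_⟩
  · exact inner_self_eq_zero.mp (neg_eq_zero.mp ((key _).symm.trans (hx _ ⟨Pm (Tp x), rfl⟩)))
  · rintro _ ⟨c, rfl⟩
    have hx : Pm (Tp x) = 0 := hx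
    simpa [hx] using key c

variable {R : E →L[ℂ] E}

lemma re_kre_apply_self_eq_norm_sq [CompleteSpace E] (hJ : IsSelfAdjoint J) (hsum : Pp + Pm = 1)
    (hTp : ∀ x y, kre J (T x) y = kre (Pp - Pm) x (Tp y)) (hR : IsJSelfAdj J R)
    (hRsq : R.comp R = T.comp Tp) {x : E} (hx : Pm (Tp x) = 0) :
    (kre J (R x) (R x)).re = ‖Tp x‖ ^ 2 := by
  have hRR : R (R x) = T (Tp x) := DFunLike.congr_fun hRsq x
  have hK : (Pp - Pm) (Tp x) = Tp x := by
    rw [sub_apply, hx, sub_zero, apply_eq_self_of_add_eq_one hsum hx]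
  rw [hR, hRR, ← conj_kre hJ, hTp, kre, hK, inner_conj_symm, inner_self_eq_norm_sq_to_K]
  norm_cast

lemma unifJPos_map_ker [CompleteSpace E] (hJ : IsSelfAdjoint J) (hsum : Pp + Pm = 1)
    (hTp : ∀ x y, kre J (T x) y = kre (Pp - Pm) x (Tp y)) (hR : IsJSelfAdj J R)
    (hRsq : R.comp R = T.comp Tp) (hTpinv : Tp.HasLeftInverse) :
    UnifJPos J (Submodule.map (R : E →ₗ[ℂ] E) (LinearMap.ker (Pm.comp Tp : E →ₗ[ℂ] F))) := by
  obtain ⟨C, hC0, hC⟩ := hTpinv.exists_norm_le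
  refine ⟨((‖R‖ * C + 1) ^ 2)⁻¹, by positivity, ?_⟩
  rintro _ ⟨x, hx, rfl⟩
  rw [ContinuousLinearMap.coe_coe, re_kre_apply_self_eq_norm_sq hJ hsum hTp hR hRsq hx,
    inv_mul_le_iff₀ (by positivity)]
  calc ‖R x‖ ^ 2 ≤ (‖R‖ * C * ‖Tp x‖) ^ 2 := by
        gcongr
        rw [mul_assoc]
        exact (R.le_opNorm x).trans (by gcongr; exact hC x)
    _ ≤ ((‖R‖ * C + 1) * ‖Tp x‖) ^ 2 := by gcongr; linarith
    _ = (‖R‖ * C + 1) ^ 2 * ‖Tp x‖ ^ 2 := mul_pow _ _ _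

lemma kre_eq_zero_of_mem_map_ker [CompleteSpace E] [CompleteSpace F] (hJ : IsSelfAdjoint J)
    (hPm : IsStarProjection Pm) (hsum : Pp + Pm = 1)
    (hTp : ∀ x y, kre J (T x) y = kre (Pp - Pm) x (Tp y)) (hR : IsJSelfAdj J R)
    (hRsq : R.comp R = T.comp Tp) :
    ∀ x ∈ Submodule.map (R : E →ₗ[ℂ] E) (LinearMap.ker (Pm.comp Tp : E →ₗ[ℂ] F)),
      ∀ y ∈ Submodule.map (R : E →ₗ[ℂ] E) (LinearMap.ker (Pp.comp Tp : E →ₗ[ℂ] F)),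
        kre J x y = 0 := by
  rintro _ ⟨x, hx, rfl⟩ _ ⟨y, hy, rfl⟩
  have hRR : R (R y) = T (Tp y) := DFunLike.congr_fun hRsq y
  have hTy : Pm (Tp y) = Tp y :=
    apply_eq_self_of_add_eq_one ((add_comm _ _).trans hsum) (hy : Pp (Tp y) = 0)
  rw [← jorthCompanion_range_comp_eq_ker hJ hPm hsum hTp] at hx
  rw [ContinuousLinearMap.coe_coe, hR, hRR, ← hTy]
  exact hx _ ⟨Tp y, rfl⟩

lemma apply_apply_mem_range [CompleteSpace F] (hJ : Injective J) (hPp : IsStarProjection Pp)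
    (hPm : IsIdempotentElem Pm) (hsum : Pp + Pm = 1)
    (hTp : ∀ x y, kre J (T x) y = kre (Pp - Pm) x (Tp y))
    (hM : LinearMap.range (T.comp Pp : F →ₗ[ℂ] E) ⊓ LinearMap.range (T.comp Pm : F →ₗ[ℂ] E) = ⊥)
    (hTpinv : Tp.HasLeftInverse) (w : E) :
    Pp (Tp w) ∈ LinearMap.range (Tp : E →ₗ[ℂ] F) := by
  have hclosed : IsClosed (LinearMap.range (Tp : E →ₗ[ℂ] F) : Set F) := hTpinv.isClosed_range
  rw [← hclosed.submodule_topologicalClosure_eq, ← Submodule.orthogonal_orthogonal_eq_closure,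
    Submodule.mem_orthogonal]
  intro v hv
  have hv' : ∀ y, inner ℂ v (Tp y) = 0 := fun y =>
    (Submodule.mem_orthogonal' _ _).mp hv _ ⟨y, rfl⟩
  have hTv : T (Pp v) = T (Pm v) := by
    refine sub_eq_zero.mp (eq_zero_of_forall_kre_eq_zero hJ fun y => ?_)
    have hsub : kre J (T (Pp v) - T (Pm v)) y = kre J (T (Pp v)) y - kre J (T (Pm v)) y := by
      simp only [kre, map_sub, inner_sub_left]
    rw [hsub, hTp, hTp, kre, kre, sub_apply_apply_left_of_add_eq_one hPp.isIdempotentElem hsum,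
      sub_apply_apply_right_of_add_eq_one hPm hsum, inner_neg_left, sub_neg_eq_add,
      ← inner_add_left, ← add_apply, hsum, one_apply_eq_self, hv']
  have hTPp : T (Pp v) = 0 := by
    have h : T (Pp v) ∈ LinearMap.range (T.comp Pp : F →ₗ[ℂ] E) ⊓
        LinearMap.range (T.comp Pm : F →ₗ[ℂ] E) := ⟨⟨v, rfl⟩, ⟨v, hTv.symm⟩⟩
    rwa [hM] at h
  calc inner ℂ v (Pp (Tp w)) = inner ℂ (Pp v) (Tp w) := (hPp.isSelfAdjoint.isSymmetric v _).symm
    _ = kre J (T (Pp v)) w := by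
      rw [hTp, kre, sub_apply_apply_left_of_add_eq_one hPp.isIdempotentElem hsum]
    _ = 0 := by simp [hTPp, kre]

lemma ker_sup_ker_eq_top [CompleteSpace F] (hJ : Injective J) (hPp : IsStarProjection Pp)
    (hPm : IsIdempotentElem Pm) (hsum : Pp + Pm = 1)
    (hTp : ∀ x y, kre J (T x) y = kre (Pp - Pm) x (Tp y))
    (hM : LinearMap.range (T.comp Pp : F →ₗ[ℂ] E) ⊓ LinearMap.range (T.comp Pm : F →ₗ[ℂ] E) = ⊥)
    (hTpinv : Tp.HasLeftInverse) :
    LinearMap.ker (Pm.comp Tp : E →ₗ[ℂ] F) ⊔ LinearMap.ker (Pp.comp Tp : E →ₗ[ℂ] F) = ⊤ := by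
  refine eq_top_iff.mpr fun w _ => ?_
  obtain ⟨u, hu : Tp u = Pp (Tp w)⟩ := apply_apply_mem_range hJ hPp hPm hsum hTp hM hTpinv w
  have hPmPp : Pm * Pp = 0 := by rw [eq_sub_of_add_eq hsum]; exact hPm.mul_one_sub_self
  refine Submodule.mem_sup.mpr ⟨u, ?_, w - u, ?_, add_sub_cancel _ _⟩
  · change Pm (Tp u) = 0
    rw [hu]
    exact DFunLike.congr_fun hPmPp _
  · change Pp (Tp (w - u)) = 0
    rw [map_sub, map_sub, hu]
    exact sub_eq_zero.mpr (DFunLike.congr_fun hPp.isIdempotentElem.eq _).symm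

end SignedFactorization

theorem sqrt_fundamental_decomposition_general
    (J : H →L[ℂ] H) (hJ : IsFundSym J) (f : I → H)
    (T : lp (fun _ : I => ℂ) 2 →L[ℂ] H)
    (Pp Pm : lp (fun _ : I => ℂ) 2 →L[ℂ] lp (fun _ : I => ℂ) 2)
    (hPp : ∀ (x : lp (fun _ : I => ℂ) 2) (i : I), Pp x i = if posIdx J f i then x i else 0)
    (hPm : ∀ (x : lp (fun _ : I => ℂ) 2) (i : I), Pm x i = if posIdx J f i then 0 else x i)
    (hJF : MaxUnifJPos J (LinearMap.range (T.comp Pp : lp (fun _ : I => ℂ) 2 →ₗ[ℂ] H)) ∧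
      MaxUnifJNeg J (LinearMap.range (T.comp Pm : lp (fun _ : I => ℂ) 2 →ₗ[ℂ] H)))
    (Tp : H →L[ℂ] lp (fun _ : I => ℂ) 2)
    (hTp : ∀ (x : lp (fun _ : I => ℂ) 2) (y : H), kre J (T x) y = kre (Pp - Pm) x (Tp y))
    (R : H →L[ℂ] H) (hRsq : R.comp R = T.comp Tp) (hRsa : IsJSelfAdj J R)
    (Rinv : H →L[ℂ] H)
    (hR1 : R.comp Rinv = ContinuousLinearMap.id ℂ H)
    (hR2 : Rinv.comp R = ContinuousLinearMap.id ℂ H) :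
    MaxUnifJPos J (Submodule.map (R : H →ₗ[ℂ] H) (JorthCompanion J (LinearMap.range (T.comp Pm : lp (fun _ : I => ℂ) 2 →ₗ[ℂ] H)))) ∧
      MaxUnifJNeg J (Submodule.map (R : H →ₗ[ℂ] H) (JorthCompanion J (LinearMap.range (T.comp Pp : lp (fun _ : I => ℂ) 2 →ₗ[ℂ] H)))) ∧
      (∀ x ∈ Submodule.map (R : H →ₗ[ℂ] H) (JorthCompanion J (LinearMap.range (T.comp Pm : lp (fun _ : I => ℂ) 2 →ₗ[ℂ] H))),
        ∀ y ∈ Submodule.map (R : H →ₗ[ℂ] H) (JorthCompanion J (LinearMap.range (T.comp Pp : lp (fun _ : I => ℂ) 2 →ₗ[ℂ] H))),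
          kre J x y = 0) ∧
      Submodule.map (R : H →ₗ[ℂ] H) (JorthCompanion J (LinearMap.range (T.comp Pm : lp (fun _ : I => ℂ) 2 →ₗ[ℂ] H))) ⊓
          Submodule.map (R : H →ₗ[ℂ] H) (JorthCompanion J (LinearMap.range (T.comp Pp : lp (fun _ : I => ℂ) 2 →ₗ[ℂ] H))) = ⊥ ∧
      Submodule.map (R : H →ₗ[ℂ] H) (JorthCompanion J (LinearMap.range (T.comp Pm : lp (fun _ : I => ℂ) 2 →ₗ[ℂ] H))) ⊔
          Submodule.map (R : H →ₗ[ℂ] H) (JorthCompanion J (LinearMap.range (T.comp Pp : lp (fun _ : I => ℂ) 2 →ₗ[ℂ] H))) = ⊤ := by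
  obtain ⟨hJsa, hJ2⟩ := hJ
  have hJinj : Injective J := Function.LeftInverse.injective (g := J) (DFunLike.congr_fun hJ2)
  have hPpproj : IsStarProjection Pp := lp.isStarProjection_of_apply_eq_ite _ hPp
  have hsum : Pp + Pm = 1 := ContinuousLinearMap.ext fun x => lp.ext <| funext fun i => by
    by_cases h : posIdx J f i <;> simp [hPp, hPm, h]
  have hPmproj : IsStarProjection Pm := eq_sub_of_add_eq' hsum ▸ hPpproj.one_sub
  have hTpinv : Tp.HasLeftInverse := by
    have hRinv : R.HasLeftInverse := ⟨Rinv, DFunLike.congr_fun hR2⟩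
    exact .of_comp (g := T) (hRsq ▸ hRinv.comp hRinv)
  have hRsurj : Surjective R := fun x => ⟨Rinv x, DFunLike.congr_fun hR1 x⟩
  have hM := inf_eq_bot_of_unifJPos_of_unifJNeg hJF.1.1 hJF.2.1
  -- Passing to `-J` with `Pp`, `Pm` swapped turns the negative half into the positive one.
  have hsum' : Pm + Pp = 1 := (add_comm _ _).trans hsum
  have hTp' : ∀ x y, kre (-J) (T x) y = kre (Pm - Pp) x (Tp y) := fun x y => by
    rw [← neg_sub, kre_neg, kre_neg, hTp]
  rw [jorthCompanion_range_comp_eq_ker hJsa hPmproj hsum hTp, ← jorthCompanion_neg,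
    jorthCompanion_range_comp_eq_ker hJsa.neg hPpproj hsum' hTp']
  have hpos := unifJPos_map_ker hJsa hsum hTp hRsa hRsq hTpinv
  have hneg := unifJPos_map_ker hJsa.neg hsum' hTp' hRsa.neg hRsq hTpinv
  have hsup := congrArg (Submodule.map (R : H →ₗ[ℂ] H))
    (ker_sup_ker_eq_top hJinj hPpproj hPmproj.isIdempotentElem hsum hTp hM hTpinv)
  rw [Submodule.map_sup, Submodule.map_top, LinearMap.range_eq_top.mpr hRsurj] at hsup
  exact ⟨maxUnifJPos_of_sup_eq_top hpos (unifJPos_neg_iff.mp hneg) hsup,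
    maxUnifJPos_neg_iff.mp (maxUnifJPos_of_sup_eq_top hneg (unifJNeg_neg_iff.mpr hpos)
      ((sup_comm _ _).trans hsup)),
    kre_eq_zero_of_mem_map_ker hJsa hPmproj hsum hTp hRsa hRsq,
    inf_eq_bot_of_unifJPos_of_unifJNeg hpos (unifJPos_neg_iff.mp hneg), hsup⟩

/-- `L₊ = S^(1/2)(M₋^[⊥])` is maximal uniformly J-positive,
`L₋ = S^(1/2)(M₊^[⊥])` is maximal uniformly J-negative, and `H = L₊ [∔] L₋` is a
fundamental decomposition. -/
theorem sqrt_fundamental_decomposition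
    (J : H →L[ℂ] H) (hJ : IsFundSym J) (f : I → H)
    (T : lp (fun _ : I => ℂ) 2 →L[ℂ] H)
    (hT : ∀ i, T (lp.single 2 i (1:ℂ)) = f i)
    (hTsurj : Function.Surjective T)
    (Pp Pm : lp (fun _ : I => ℂ) 2 →L[ℂ] lp (fun _ : I => ℂ) 2)
    (hPp : ∀ (x : lp (fun _ : I => ℂ) 2) (i : I), Pp x i = if posIdx J f i then x i else 0)
    (hPm : ∀ (x : lp (fun _ : I => ℂ) 2) (i : I), Pm x i = if posIdx J f i then 0 else x i)
    (hJF : MaxUnifJPos J (LinearMap.range (T.comp Pp : lp (fun _ : I => ℂ) 2 →ₗ[ℂ] H)) ∧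
      MaxUnifJNeg J (LinearMap.range (T.comp Pm : lp (fun _ : I => ℂ) 2 →ₗ[ℂ] H)))
    (Tp : H →L[ℂ] lp (fun _ : I => ℂ) 2)
    (hTp : ∀ (x : lp (fun _ : I => ℂ) 2) (y : H), kre J (T x) y = kre (Pp - Pm) x (Tp y))
    (R : H →L[ℂ] H) (hRsq : R.comp R = T.comp Tp) (hRsa : IsJSelfAdj J R)
    (Rinv : H →L[ℂ] H)
    (hR1 : R.comp Rinv = ContinuousLinearMap.id ℂ H)
    (hR2 : Rinv.comp R = ContinuousLinearMap.id ℂ H)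
    (hRspec : ∀ z ∈ spectrum ℂ R, |z.im| < z.re) :
    MaxUnifJPos J (Submodule.map (R : H →ₗ[ℂ] H) (JorthCompanion J (LinearMap.range (T.comp Pm : lp (fun _ : I => ℂ) 2 →ₗ[ℂ] H)))) ∧
      MaxUnifJNeg J (Submodule.map (R : H →ₗ[ℂ] H) (JorthCompanion J (LinearMap.range (T.comp Pp : lp (fun _ : I => ℂ) 2 →ₗ[ℂ] H)))) ∧
      (∀ x ∈ Submodule.map (R : H →ₗ[ℂ] H) (JorthCompanion J (LinearMap.range (T.comp Pm : lp (fun _ : I => ℂ) 2 →ₗ[ℂ] H))),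
        ∀ y ∈ Submodule.map (R : H →ₗ[ℂ] H) (JorthCompanion J (LinearMap.range (T.comp Pp : lp (fun _ : I => ℂ) 2 →ₗ[ℂ] H))),
          kre J x y = 0) ∧
      Submodule.map (R : H →ₗ[ℂ] H) (JorthCompanion J (LinearMap.range (T.comp Pm : lp (fun _ : I => ℂ) 2 →ₗ[ℂ] H))) ⊓
          Submodule.map (R : H →ₗ[ℂ] H) (JorthCompanion J (LinearMap.range (T.comp Pp : lp (fun _ : I => ℂ) 2 →ₗ[ℂ] H))) = ⊥ ∧
      Submodule.map (R : H →ₗ[ℂ] H) (JorthCompanion J (LinearMap.range (T.comp Pm : lp (fun _ : I => ℂ) 2 →ₗ[ℂ] H))) ⊔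
          Submodule.map (R : H →ₗ[ℂ] H) (JorthCompanion J (LinearMap.range (T.comp Pp : lp (fun _ : I => ℂ) 2 →ₗ[ℂ] H))) = ⊤ :=
  sqrt_fundamental_decomposition_general J hJ f T Pp Pm hPp hPm hJF Tp hTp R hRsq hRsa Rinv hR1 hR2
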